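/- Let (C_t)_{t∈ℤ} be a partition of a code C ⊆ {0,1}^m by type, where type(c) = max_{i ∈ supp(c)} t(i) for a grouping function t : [m] → ℤ with groups I_t = t^{-1}(t). Then Σ_{t ∈ ℤ} CL((C_t ∪ C_{t+1})|_{I_t}) ≤ 2·CL(C). -/

import Mathlib

namespace Paper

/-- A chain of length `ℓ` in a code `C ⊆ {0,1}^m`. -/
def HasChain {m : ℕ} (C : Set (Fin m → Bool)) (ℓ : ℕ) : Prop :=
  ∃ (a : Fin ℓ → Fin m) (c : Fin ℓ → (Fin m → Bool)),
    Function.Injective a ∧ Function.Injective c ∧ (∀ i, c i ∈ C) ∧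
    (∀ i, c i (a i) = true) ∧ (∀ i j : Fin ℓ, i < j → c i (a j) = false)

/-- The chain length of a code. -/
noncomputable def CL {m : ℕ} (C : Set (Fin m → Bool)) : ℕ := sSup {ℓ | HasChain C ℓ}

/-- The support of a code. -/
def Supp {m : ℕ} (C : Set (Fin m → Bool)) : Set (Fin m) := {i | ∃ c ∈ C, c i = true}

/-- Hamming weight. -/
def wt {m : ℕ} (c : Fin m → Bool) : ℕ := (Finset.univ.filter fun i => c i = true).card

open Classical in
/-- Zero out the coordinates outside `S`. -/
noncomputable def mask {m : ℕ} (S : Set (Fin m)) (c : Fin m → Bool) : Fin m → Bool :=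
  fun i => if i ∈ S then c i else false

/-- Restriction of a code to a coordinate set `S`. -/
noncomputable def restrict {m : ℕ} (C : Set (Fin m → Bool)) (S : Set (Fin m)) :
    Set (Fin m → Bool) := mask S '' C

/-- Non-redundancy of a code. -/
noncomputable def NRD {m : ℕ} (C : Set (Fin m → Bool)) : ℕ :=
  sSup {k | ∃ S : Finset (Fin m), S.card = k ∧
    ∀ j ∈ S, ∃ c ∈ C, c j = true ∧ ∀ i ∈ S, i ≠ j → c i = false}

/-- The density `Φ(C)` of a finite code. -/
noncomputable def density {m : ℕ} (C : Finset (Fin m → Bool)) : ℝ :=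
  sInf {x : ℝ | ∃ C' : Finset (Fin m → Bool), C' ⊆ C ∧ C'.Nonempty ∧
    1 ≤ CL (↑C' : Set (Fin m → Bool)) ∧
    x = (Supp (↑C' : Set (Fin m → Bool))).ncard / (CL (↑C' : Set (Fin m → Bool)) : ℝ)}

/-- The group of coordinates with label `t`. -/
def grp {m : ℕ} (tf : Fin m → ℤ) (t : ℤ) : Set (Fin m) := {i | tf i = t}

/-- The codewords of type `t`: those whose maximal coordinate label equals `t`. -/
def typeClass {m : ℕ} (C : Set (Fin m → Bool)) (tf : Fin m → ℤ) (t : ℤ) :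
    Set (Fin m → Bool) :=
  {c ∈ C | (∃ i, c i = true ∧ tf i = t) ∧ ∀ i, c i = true → tf i ≤ t}

/-
Write `Dₜ = Cₜ ∪ Cₜ₊₁`. A codeword of `Dₛ` has type at most `s + 1`, so it vanishes on every group
`Iₜ` with `t ≥ s + 2`. Hence chains in the restrictions `Dₜ|_{Iₜ}` lift to chains in `C` with
coordinates in `Iₜ`, and for `t` ranging over integers of one parity these chains can be
concatenated in increasing order of `t` into a single chain in `C`. Each parity class therefore
contributes at most `CL(C)`.
-/

section

variable {m : ℕ}

theorem hasChain_le_length {C : Set (Fin m → Bool)} {ℓ : ℕ} (h : HasChain C ℓ) : ℓ ≤ m := by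
  obtain ⟨a, -, ha, -⟩ := h
  simpa using Fintype.card_le_of_injective a ha

theorem bddAbove_setOf_hasChain (C : Set (Fin m → Bool)) : BddAbove {ℓ | HasChain C ℓ} :=
  ⟨m, fun _ ↦ hasChain_le_length⟩

theorem hasChain_zero (C : Set (Fin m → Bool)) : HasChain C 0 :=
  ⟨Fin.elim0, Fin.elim0, fun i ↦ i.elim0, fun i ↦ i.elim0, fun i ↦ i.elim0, fun i ↦ i.elim0,
    fun i ↦ i.elim0⟩

theorem hasChain_CL (C : Set (Fin m → Bool)) : HasChain C (CL C) :=
  Nat.sSup_mem ⟨0, hasChain_zero C⟩ (bddAbove_setOf_hasChain C)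

theorem le_CL {C : Set (Fin m → Bool)} {ℓ : ℕ} (h : HasChain C ℓ) : ℓ ≤ CL C :=
  le_csSup (bddAbove_setOf_hasChain C) h

theorem HasChain.mono {C C' : Set (Fin m → Bool)} {ℓ : ℕ} (h : HasChain C ℓ) (hC : C ⊆ C') :
    HasChain C' ℓ :=
  let ⟨a, c, ha, hc, hmem, hdiag, hord⟩ := h
  ⟨a, c, ha, hc, fun i ↦ hC (hmem i), hdiag, hord⟩

theorem CL_mono {C C' : Set (Fin m → Bool)} (hC : C ⊆ C') : CL C ≤ CL C' :=
  le_CL ((hasChain_CL C).mono hC)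

/-- The injectivity conditions in `HasChain` follow from the others. -/
theorem hasChain_of_apply {C : Set (Fin m → Bool)} {ℓ : ℕ} (a : Fin ℓ → Fin m)
    (c : Fin ℓ → Fin m → Bool) (hmem : ∀ i, c i ∈ C) (hdiag : ∀ i, c i (a i) = true)
    (hord : ∀ i j, i < j → c i (a j) = false) : HasChain C ℓ := by
  refine ⟨a, c, .of_lt_imp_ne fun i j hij h ↦ ?_, .of_lt_imp_ne fun i j hij h ↦ ?_,
    hmem, hdiag, hord⟩
  · simpa [← h, hdiag] using hord i j hij
  · simpa [h, hdiag] using hord i j hij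

/-- A chain written as the list of its pairs `(a i, c i)`; unlike `HasChain`, this form is
closed under concatenation. -/
def IsChainList (C : Set (Fin m → Bool)) (l : List (Fin m × (Fin m → Bool))) : Prop :=
  (∀ p ∈ l, p.2 ∈ C ∧ p.2 p.1 = true) ∧ l.Pairwise fun p q ↦ p.2 q.1 = false

theorem IsChainList.hasChain {C : Set (Fin m → Bool)} {l : List (Fin m × (Fin m → Bool))}
    (h : IsChainList C l) : HasChain C l.length :=
  hasChain_of_apply (fun i ↦ (l.get i).1) (fun i ↦ (l.get i).2)
    (fun i ↦ (h.1 _ (l.get_mem i)).1) (fun i ↦ (h.1 _ (l.get_mem i)).2)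
    (List.pairwise_iff_get.1 h.2)

theorem HasChain.exists_isChainList {C : Set (Fin m → Bool)} {ℓ : ℕ} (h : HasChain C ℓ) :
    ∃ l, l.length = ℓ ∧ IsChainList C l := by
  obtain ⟨a, c, -, -, hmem, hdiag, hord⟩ := h
  refine ⟨List.ofFn fun i ↦ (a i, c i), List.length_ofFn, ?_, List.pairwise_ofFn.2 hord⟩
  simp only [List.mem_ofFn]
  rintro _ ⟨i, rfl⟩
  exact ⟨hmem i, hdiag i⟩

theorem IsChainList.mono {C C' : Set (Fin m → Bool)} {l : List (Fin m × (Fin m → Bool))}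
    (h : IsChainList C l) (hC : C ⊆ C') : IsChainList C' l :=
  ⟨fun p hp ↦ ⟨hC (h.1 p hp).1, (h.1 p hp).2⟩, h.2⟩

theorem IsChainList.append {C : Set (Fin m → Bool)} {l₁ l₂ : List (Fin m × (Fin m → Bool))}
    (h₁ : IsChainList C l₁) (h₂ : IsChainList C l₂)
    (hcross : ∀ p ∈ l₁, ∀ q ∈ l₂, p.2 q.1 = false) : IsChainList C (l₁ ++ l₂) := by
  refine ⟨fun p hp ↦ ?_, List.pairwise_append.2 ⟨h₁.2, h₂.2, hcross⟩⟩
  rcases List.mem_append.1 hp with hp | hp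
  exacts [h₁.1 p hp, h₂.1 p hp]

theorem mask_apply_of_mem {S : Set (Fin m)} {c : Fin m → Bool} {i : Fin m} (hi : i ∈ S) :
    mask S c i = c i := by
  simp [mask, hi]

theorem mem_of_mask_apply_eq_true {S : Set (Fin m)} {c : Fin m → Bool} {i : Fin m}
    (h : mask S c i = true) : i ∈ S := by
  by_contra hi
  simp [mask, hi] at h

/-- Replace each codeword by a preimage under `mask S`, which agrees with it on `S`. -/
theorem IsChainList.exists_lift_of_restrict {D : Set (Fin m → Bool)} {S : Set (Fin m)}
    {l : List (Fin m × (Fin m → Bool))} (h : IsChainList (restrict D S) l) :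
    ∃ l' : List (Fin m × (Fin m → Bool)),
      l'.length = l.length ∧ IsChainList D l' ∧ ∀ p ∈ l', p.1 ∈ S := by
  set lift := Function.invFunOn (mask S) D
  have hlift : ∀ p ∈ l, lift p.2 ∈ D ∧ mask S (lift p.2) = p.2 := fun p hp ↦
    ⟨Function.invFunOn_mem (h.1 p hp).1, Function.invFunOn_eq (h.1 p hp).1⟩
  have hS : ∀ p ∈ l, p.1 ∈ S := fun p hp ↦ by
    apply mem_of_mask_apply_eq_true (c := lift p.2)
    rw [(hlift p hp).2]
    exact (h.1 p hp).2
  have hagree : ∀ p ∈ l, ∀ q ∈ l, lift p.2 q.1 = p.2 q.1 := fun p hp q hq ↦ by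
    rw [← mask_apply_of_mem (c := lift p.2) (hS q hq), (hlift p hp).2]
  refine ⟨l.map fun p ↦ (p.1, lift p.2), List.length_map _, ⟨?_, ?_⟩, ?_⟩
  · simp only [List.mem_map]
    rintro _ ⟨p, hp, rfl⟩
    exact ⟨(hlift p hp).1, (hagree p hp p hp).trans (h.1 p hp).2⟩
  · refine List.pairwise_map.2 (h.2.imp_of_mem fun hp hq hpq ↦ ?_)
    exact (hagree _ hp _ hq).trans hpq
  · simp only [List.mem_map]
    rintro _ ⟨p, hp, rfl⟩
    exact hS p hp

/-- The chains of the `D t|_{S t}`, lifted to `D t`, concatenate in increasing order of `t`. -/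
theorem sum_CL_restrict_le_CL_biUnion {ι : Type*} [LinearOrder ι] (D : ι → Set (Fin m → Bool))
    (S : ι → Set (Fin m)) (F : Finset ι)
    (hsep : ∀ s ∈ F, ∀ t ∈ F, s < t → ∀ c ∈ D s, ∀ i ∈ S t, c i = false) :
    ∑ t ∈ F, CL (restrict (D t) (S t)) ≤ CL (⋃ t ∈ F, D t) := by
  classical
  suffices ∃ l, l.length = ∑ t ∈ F, CL (restrict (D t) (S t)) ∧ IsChainList (⋃ t ∈ F, D t) l by
    obtain ⟨l, hlen, hl⟩ := this
    exact hlen ▸ le_CL hl.hasChain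
  induction F using Finset.induction_on_max with
  | empty => exact ⟨[], by simp, by simp [IsChainList]⟩
  | insert t F hlt ih =>
    obtain ⟨l₁, hlen₁, hl₁⟩ := ih fun s hs u hu ↦ hsep s (F.mem_insert_of_mem hs) u
      (F.mem_insert_of_mem hu)
    obtain ⟨l₀, hlen₀, hl₀⟩ := (hasChain_CL (restrict (D t) (S t))).exists_isChainList
    obtain ⟨l₂, hlen₂, hl₂, hl₂S⟩ := hl₀.exists_lift_of_restrict
    have hsub : ∀ u ∈ insert t F, D u ⊆ ⋃ v ∈ insert t F, D v := fun u hu ↦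
      Set.subset_iUnion₂ (s := fun v (_ : v ∈ insert t F) ↦ D v) u hu
    refine ⟨l₁ ++ l₂, ?_, ?_⟩
    · rw [List.length_append, hlen₁, hlen₂, hlen₀, Finset.sum_insert fun ht ↦ (hlt t ht).false,
        add_comm]
    refine (hl₁.mono (Set.iUnion₂_subset fun u hu ↦ hsub u (F.mem_insert_of_mem hu))).append
      (hl₂.mono (hsub t (F.mem_insert_self t))) fun p hp q hq ↦ ?_
    obtain ⟨s, hs, hps⟩ := Set.mem_iUnion₂.1 (hl₁.1 p hp).1
    exact hsep s (F.mem_insert_of_mem hs) t (F.mem_insert_self t) (hlt s hs) _ hps _ (hl₂S q hq)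

theorem typeClass_subset (C : Set (Fin m → Bool)) (tf : Fin m → ℤ) (t : ℤ) :
    typeClass C tf t ⊆ C :=
  fun _ hc ↦ hc.1

theorem apply_eq_false_of_mem_typeClass {C : Set (Fin m → Bool)} {tf : Fin m → ℤ}
    {t : ℤ} {c : Fin m → Bool} (hc : c ∈ typeClass C tf t) {i : Fin m} (hi : t < tf i) :
    c i = false := by
  by_contra h
  have := hc.2.2 i (by simpa using h)
  omega

end

theorem add_one_lt_of_lt_of_even_iff {s t : ℤ} (hst : s < t) (hpar : Even s ↔ Even t) :
    s + 1 < t := by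
  by_contra h
  obtain rfl : t = s + 1 := by omega
  rw [Int.even_add_one] at hpar
  tauto

/-- `Σ_{t ∈ ℤ} CL((C_t ∪ C_{t+1})|_{I_t}) ≤ 2·CL(C)`
(stated for every finite set of integers, as all terms are nonnegative). -/
theorem sum_cl_groups_le {m : ℕ} (C : Set (Fin m → Bool)) (tf : Fin m → ℤ)
    (F : Finset ℤ) :
    ∑ t ∈ F, CL (restrict (typeClass C tf t ∪ typeClass C tf (t + 1)) (grp tf t)) ≤
      2 * CL C := by
  have hpart : ∀ G : Finset ℤ, (∀ s ∈ G, ∀ t ∈ G, s < t → s + 1 < t) →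
      ∑ t ∈ G, CL (restrict (typeClass C tf t ∪ typeClass C tf (t + 1)) (grp tf t)) ≤ CL C := by
    intro G hG
    refine (sum_CL_restrict_le_CL_biUnion _ _ G fun s hs t ht hst c hc i hi ↦ ?_).trans
      (CL_mono (Set.iUnion₂_subset fun t _ ↦
        Set.union_subset (typeClass_subset C tf t) (typeClass_subset C tf (t + 1))))
    have hsi : s + 1 < tf i := (hG s hs t ht hst).trans_eq hi.symm
    rcases hc with hc | hc
    exacts [apply_eq_false_of_mem_typeClass hc (by omega), apply_eq_false_of_mem_typeClass hc hsi]
  rw [← Finset.sum_filter_add_sum_filter_not F Even, two_mul]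
  refine add_le_add (hpart _ fun s hs t ht hst ↦ ?_) (hpart _ fun s hs t ht hst ↦ ?_)
  all_goals
    rw [Finset.mem_filter] at hs ht
    exact add_one_lt_of_lt_of_even_iff hst (by tauto)

end Paper
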